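/- Let $N \ge 3$, $\nu = \frac{N-2}{2}$, $k = 2\frac{N-1}{N-2}$, and define $\alpha(t) := A_\nu \sqrt{t}\, J_\nu(2\nu t^{-1/(2\nu)})$ for $t > 0$, where $A_\nu = \nu^{-\nu}\Gamma(\nu+1)$ and $J_\nu$ is the Bessel function of the first kind of order $\nu$. Then $\alpha$ satisfies $\alpha''(t) + t^{-k}\alpha(t) = 0$ for all $t \in (0,\infty)$ and $\alpha(t) \to 1$ as $t \to +\infty$. -/

import Mathlib

open Real Set Filter

/-- The Bessel function of the first kind of order `ν`, defined by its power series. -/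
noncomputable def besselJ (ν : ℝ) (s : ℝ) : ℝ :=
  ∑' j : ℕ, (-1 : ℝ) ^ j / (Real.Gamma ((j : ℝ) + 1) * Real.Gamma ((j : ℝ) + ν + 1)) *
    (s / 2) ^ (ν + 2 * (j : ℝ))

/-- The function `α(t) = A_ν √t J_ν(2ν t^{-1/(2ν)})` with `A_ν = ν^{-ν} Γ(ν+1)`,
`ν = (N-2)/2`. -/
noncomputable def alphaFun (N : ℕ) (t : ℝ) : ℝ :=
  (((N : ℝ) - 2) / 2) ^ (-(((N : ℝ) - 2) / 2)) * Real.Gamma (((N : ℝ) - 2) / 2 + 1) *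
    Real.sqrt t *
    besselJ (((N : ℝ) - 2) / 2) (2 * (((N : ℝ) - 2) / 2) * t ^ (-(1 / (2 * (((N : ℝ) - 2) / 2)))))

/-!
Substituting the power series of `J_ν` gives `α(t) = ∑ c_j t^{-j/ν}` with
`c_j = (-1)^j Γ(ν+1) ν^{2j} / (j! Γ(j+ν+1))`: the factor `√t` cancels the `t^{-1/2}` coming from
`(ν t^{-1/(2ν)})^ν`, and `A_ν` normalises `c_0 = 1`. Since `|c_j| ≤ ν^{2j}/j!`, the series may be
differentiated termwise twice on `(0, ∞)`, and the recursion
`c_{j+1} · (j+1)/ν · ((j+1)/ν + 1) = -c_j` turns `α''` into `-t^{-(2 + 1/ν)} α = -t^{-k} α`.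
Finally `α(t) = P(t^{-1/ν})` for the entire power series `P(x) = ∑ c_j x^j`, so
`α(t) → P(0) = c_0 = 1` as `t → ∞`.
-/

open scoped Nat Topology

lemma hasDerivAt_tsum_rpow {c p : ℕ → ℝ} {t : ℝ} (ht : 0 < t) (hp : ∀ j, p j ≤ 1)
    (hsum : Summable fun j => c j * t ^ p j)
    (hu : Summable fun j => |c j * p j| * (t / 2) ^ (p j - 1)) :
    HasDerivAt (fun s => ∑' j, c j * s ^ p j) (∑' j, c j * p j * t ^ (p j - 1)) t := by
  have ha : 0 < t / 2 := by positivity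
  have htmem : t ∈ Ioi (t / 2) := by rw [mem_Ioi]; linarith
  refine hasDerivAt_tsum_of_isPreconnected (g := fun j s => c j * s ^ p j)
    (g' := fun j s => c j * p j * s ^ (p j - 1)) hu isOpen_Ioi (convex_Ioi _).isPreconnected
    (fun j s hs => ?_) (fun j s hs => ?_) htmem hsum htmem
  · have hs0 : s ≠ 0 := (ha.trans hs).ne'
    simpa only [mul_assoc] using (hasDerivAt_rpow_const (p := p j) (Or.inl hs0)).const_mul (c j)
  · rw [norm_mul, norm_eq_abs, norm_eq_abs, abs_of_pos (rpow_pos_of_pos (ha.trans hs) _)]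
    exact mul_le_mul_of_nonneg_left (rpow_le_rpow_of_nonpos ha hs.le (sub_nonpos.2 (hp j)))
      (abs_nonneg _)

noncomputable def besselCoeff (ν : ℝ) (j : ℕ) : ℝ :=
  (-1) ^ j * Gamma (ν + 1) * ν ^ (2 * j) / (j ! * Gamma (j + ν + 1))

section
variable {ν : ℝ}

lemma Gamma_natCast_succ_add_add_one (hν : 0 < ν) (j : ℕ) :
    Gamma ((j + 1 : ℕ) + ν + 1) = (j + ν + 1) * Gamma (j + ν + 1) := by
  rw [← Gamma_add_one (by positivity)]
  push_cast
  ring_nf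

lemma Gamma_add_one_le_Gamma_natCast_add (hν : 0 < ν) (j : ℕ) :
    Gamma (ν + 1) ≤ Gamma (j + ν + 1) := by
  induction j with
  | zero => simp
  | succ j ih =>
    have : 0 < Gamma (j + ν + 1) := Gamma_pos_of_pos (by positivity)
    rw [Gamma_natCast_succ_add_add_one hν]
    nlinarith

lemma besselCoeff_zero (hν : 0 < ν) : besselCoeff ν 0 = 1 := by
  have : Gamma (ν + 1) ≠ 0 := (Gamma_pos_of_pos (by linarith)).ne'
  simp [besselCoeff, this]

lemma abs_besselCoeff_le (hν : 0 < ν) (j : ℕ) : |besselCoeff ν j| ≤ (ν ^ 2) ^ j / j ! := by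
  have hΓ : 0 < Gamma (ν + 1) := Gamma_pos_of_pos (by linarith)
  rw [besselCoeff, abs_div, abs_mul, abs_mul, abs_pow, abs_neg, abs_one, one_pow, one_mul,
    abs_of_pos hΓ, abs_of_pos (by positivity), abs_of_pos (by positivity), ← pow_mul,
    div_le_div_iff₀ (by positivity) (by positivity)]
  calc Gamma (ν + 1) * ν ^ (2 * j) * j ! = ν ^ (2 * j) * j ! * Gamma (ν + 1) := by ring
    _ ≤ ν ^ (2 * j) * j ! * Gamma (j + ν + 1) := by
      gcongr; exact Gamma_add_one_le_Gamma_natCast_add hν j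
    _ = ν ^ (2 * j) * (j ! * Gamma (j + ν + 1)) := by ring

lemma besselCoeff_succ_mul (hν : 0 < ν) (j : ℕ) :
    besselCoeff ν (j + 1) * (-ν⁻¹ * (j + 1 : ℕ)) * (-ν⁻¹ * (j + 1 : ℕ) - 1) =
      -besselCoeff ν j := by
  have hΓ : 0 < Gamma (j + ν + 1) := Gamma_pos_of_pos (by positivity)
  rw [besselCoeff, besselCoeff, Gamma_natCast_succ_add_add_one hν, Nat.factorial_succ]
  push_cast
  field_simp
  ring

lemma summable_besselCoeff_mul_rpow (hν : 0 < ν) {w : ℕ → ℝ} {K : ℝ}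
    (hw : ∀ j, |w j| ≤ K * 4 ^ j) {a : ℝ} (ha : 0 < a) (r : ℝ) :
    Summable fun j => |besselCoeff ν j * w j| * a ^ (-ν⁻¹ * j + r) := by
  refine Summable.of_nonneg_of_le (fun j => by positivity) (fun j => ?_)
    ((summable_pow_div_factorial (4 * ν ^ 2 * a ^ (-ν⁻¹))).mul_left (a ^ r * K))
  rw [rpow_add ha, rpow_mul_natCast ha.le, abs_mul]
  calc |besselCoeff ν j| * |w j| * ((a ^ (-ν⁻¹)) ^ j * a ^ r)
      ≤ (ν ^ 2) ^ j / j ! * (K * 4 ^ j) * ((a ^ (-ν⁻¹)) ^ j * a ^ r) := by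
        gcongr
        exacts [abs_besselCoeff_le hν j, hw j]
    _ = a ^ r * K * ((4 * ν ^ 2 * a ^ (-ν⁻¹)) ^ j / j !) := by ring

lemma abs_neg_inv_mul_natCast_le (hν : 0 < ν) (j : ℕ) : |-ν⁻¹ * j| ≤ ν⁻¹ * 4 ^ j := by
  have : (j : ℝ) ≤ 4 ^ j := by exact_mod_cast (Nat.lt_pow_self (by norm_num)).le
  rw [abs_mul, abs_neg, abs_of_pos (inv_pos.2 hν), Nat.abs_cast]
  gcongr

lemma abs_neg_inv_mul_natCast_mul_sub_one_le (hν : 0 < ν) (j : ℕ) :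
    |-ν⁻¹ * j * (-ν⁻¹ * j - 1)| ≤ ν⁻¹ * (ν⁻¹ + 1) * 4 ^ j := by
  have hj : (j : ℝ) ≤ 2 ^ j := by exact_mod_cast (Nat.lt_two_pow_self).le
  have hj1 : (1 : ℝ) ≤ 2 ^ j := one_le_pow₀ (by norm_num)
  have hνinv : 0 < ν⁻¹ := inv_pos.2 hν
  rw [show -ν⁻¹ * j * (-ν⁻¹ * j - 1) = ν⁻¹ * j * (ν⁻¹ * j + 1) by ring,
    abs_of_nonneg (by positivity), show (4 : ℝ) ^ j = 2 ^ j * 2 ^ j by rw [← mul_pow]; norm_num]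
  calc ν⁻¹ * j * (ν⁻¹ * j + 1) ≤ ν⁻¹ * 2 ^ j * (ν⁻¹ * 2 ^ j + 2 ^ j) := by gcongr
    _ = ν⁻¹ * (ν⁻¹ + 1) * (2 ^ j * 2 ^ j) := by ring

noncomputable def besselSeries (ν t : ℝ) : ℝ := ∑' j : ℕ, besselCoeff ν j * t ^ (-ν⁻¹ * j)

lemma rescaled_besselJ_eq_besselSeries (hν : 0 < ν) {t : ℝ} (ht : 0 < t) :
    ν ^ (-ν) * Gamma (ν + 1) * √t * besselJ ν (2 * ν * t ^ (-(1 / (2 * ν)))) =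
      besselSeries ν t := by
  rw [besselJ, besselSeries, ← tsum_mul_left]
  refine tsum_congr fun j => ?_
  have hexp : -(1 / (2 * ν)) * (ν + 2 * j) = -(1 / 2) + -ν⁻¹ * j := by field_simp; ring
  have hν_pow : ν ^ (-ν) * ν ^ (ν + 2 * (j : ℝ)) = ν ^ (2 * j) := by
    rw [← rpow_add hν, neg_add_cancel_left, ← Nat.cast_ofNat, ← Nat.cast_mul, rpow_natCast]
  have ht_pow : √t * t ^ (-(1 / 2) : ℝ) = 1 := by
    rw [sqrt_eq_rpow, ← rpow_add ht]; norm_num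
  rw [mul_div_right_comm, mul_div_cancel_left₀ _ two_ne_zero, mul_rpow hν.le (rpow_nonneg ht.le _),
    ← rpow_mul ht.le, hexp, rpow_add ht, Gamma_nat_eq_factorial, besselCoeff]
  linear_combination (-1) ^ j * Gamma (ν + 1) / (j ! * Gamma (j + ν + 1)) *
      t ^ (-ν⁻¹ * j) * (√t * t ^ (-(1 / 2) : ℝ) * hν_pow + ν ^ (2 * j) * ht_pow)

lemma summable_besselSeries (hν : 0 < ν) {t : ℝ} (ht : 0 < t) :
    Summable fun j => besselCoeff ν j * t ^ (-ν⁻¹ * j) := by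
  refine .of_norm ((summable_besselCoeff_mul_rpow hν (w := 1) (K := 1) (fun j => ?_) ht 0).congr
    fun j => ?_)
  · simpa using one_le_pow₀ (by norm_num : (1 : ℝ) ≤ 4)
  · simp [abs_of_pos (rpow_pos_of_pos ht _)]

lemma hasDerivAt_besselSeries (hν : 0 < ν) {t : ℝ} (ht : 0 < t) :
    HasDerivAt (besselSeries ν)
      (∑' j : ℕ, besselCoeff ν j * (-ν⁻¹ * j) * t ^ (-ν⁻¹ * j - 1)) t := by
  refine hasDerivAt_tsum_rpow ht (fun j => ?_) (summable_besselSeries hν ht)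
    ((summable_besselCoeff_mul_rpow hν (abs_neg_inv_mul_natCast_le hν) (half_pos ht) (-1)).congr
      fun j => by rw [sub_eq_add_neg])
  have : 0 ≤ ν⁻¹ * j := by positivity
  linarith

lemma hasDerivAt_deriv_besselSeries (hν : 0 < ν) {t : ℝ} (ht : 0 < t) :
    HasDerivAt (fun s => ∑' j : ℕ, besselCoeff ν j * (-ν⁻¹ * j) * s ^ (-ν⁻¹ * j - 1))
      (∑' j : ℕ, besselCoeff ν j * (-ν⁻¹ * j) * (-ν⁻¹ * j - 1) * t ^ (-ν⁻¹ * j - 1 - 1)) t := by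
  refine hasDerivAt_tsum_rpow (c := fun j => besselCoeff ν j * (-ν⁻¹ * j)) ht (fun j => ?_)
    (.of_norm ((summable_besselCoeff_mul_rpow hν (abs_neg_inv_mul_natCast_le hν) ht (-1)).congr
      fun j => ?_))
    ((summable_besselCoeff_mul_rpow hν (abs_neg_inv_mul_natCast_mul_sub_one_le hν) (half_pos ht)
      (-2)).congr fun j => ?_)
  · have : 0 ≤ ν⁻¹ * j := by positivity
    linarith
  · rw [norm_mul, norm_eq_abs, norm_eq_abs, abs_of_pos (rpow_pos_of_pos ht _), sub_eq_add_neg]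
  · ring_nf

lemma besselSeries_ode (hν : 0 < ν) {t : ℝ} (ht : 0 < t) :
    deriv (deriv (besselSeries ν)) t + t ^ (-(ν⁻¹ + 2)) * besselSeries ν t = 0 := by
  have hderiv : EqOn (deriv (besselSeries ν))
      (fun s => ∑' j : ℕ, besselCoeff ν j * (-ν⁻¹ * j) * s ^ (-ν⁻¹ * j - 1)) (Ioi 0) :=
    fun s hs => (hasDerivAt_besselSeries hν hs).deriv
  rw [(hderiv.eventuallyEq_of_mem (Ioi_mem_nhds ht)).deriv_eq,
    (hasDerivAt_deriv_besselSeries hν ht).deriv]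
  set f : ℕ → ℝ := fun j => besselCoeff ν j * (-ν⁻¹ * j) * (-ν⁻¹ * j - 1) * t ^ (-ν⁻¹ * j - 1 - 1)
  have hshift : HasSum (fun j => f (j + 1)) (-t ^ (-(ν⁻¹ + 2)) * besselSeries ν t) := by
    refine ((summable_besselSeries hν ht).hasSum.mul_left _).congr_fun fun j => ?_
    have hpow : t ^ (-ν⁻¹ * (j + 1 : ℕ) - 1 - 1) = t ^ (-(ν⁻¹ + 2)) * t ^ (-ν⁻¹ * j) := by
      rw [← rpow_add ht]; push_cast; ring_nf
    simp only [f, hpow]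
    linear_combination t ^ (-(ν⁻¹ + 2)) * t ^ (-ν⁻¹ * j) * besselCoeff_succ_mul hν j
  have hsum : HasSum f (-t ^ (-(ν⁻¹ + 2)) * besselSeries ν t) := by
    rw [← hasSum_nat_add_iff' 1]
    simpa [f] using hshift
  rw [hsum.tsum_eq]
  ring

lemma tendsto_besselSeries_atTop (hν : 0 < ν) : Tendsto (besselSeries ν) atTop (𝓝 1) := by
  set P : ℝ → ℝ := fun x => ∑' j : ℕ, besselCoeff ν j * x ^ j
  have habs : Summable fun j => |besselCoeff ν j| :=
    .of_nonneg_of_le (fun j => abs_nonneg _) (abs_besselCoeff_le hν)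
      (summable_pow_div_factorial _)
  have hP : ContinuousAt P 0 := by
    refine (continuousOn_tsum (fun j => by fun_prop) habs fun j x hx => ?_).continuousAt
      (Icc_mem_nhds (by norm_num : (-1 : ℝ) < 0) one_pos)
    rw [norm_mul, norm_pow, norm_eq_abs, norm_eq_abs]
    exact mul_le_of_le_one_right (abs_nonneg _) (pow_le_one₀ (abs_nonneg _) (abs_le.2 hx))
  have hP0 : P 0 = 1 := by
    rw [show P 0 = besselCoeff ν 0 from (tsum_eq_single 0 fun j hj => by simp [hj]).trans
      (by simp), besselCoeff_zero hν]
  have hcomp : P ∘ (fun t => t ^ (-ν⁻¹)) =ᶠ[atTop] besselSeries ν := by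
    filter_upwards [eventually_gt_atTop 0] with t ht
    simp only [Function.comp, P, besselSeries, rpow_mul_natCast ht.le]
  rw [← hP0]
  exact (hP.tendsto.comp (tendsto_rpow_neg_atTop (inv_pos.2 hν))).congr' hcomp

end

theorem stmt2 (N : ℕ) (hN : 3 ≤ N) (k : ℝ) (hk : k = 2 * ((N : ℝ) - 1) / ((N : ℝ) - 2)) :
    (∀ t ∈ Set.Ioi (0 : ℝ),
      deriv (deriv (alphaFun N)) t + t ^ (-k) * alphaFun N t = 0) ∧
    Filter.Tendsto (alphaFun N) Filter.atTop (nhds 1) := by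
  set ν : ℝ := ((N : ℝ) - 2) / 2 with hν_def
  have hN' : (3 : ℝ) ≤ N := by exact_mod_cast hN
  have hν : 0 < ν := by linarith
  have hk' : k = ν⁻¹ + 2 := by
    rw [hk, hν_def]
    field_simp [show (N : ℝ) - 2 ≠ 0 by linarith]
    ring
  have hα : EqOn (alphaFun N) (besselSeries ν) (Ioi 0) :=
    fun t ht => rescaled_besselJ_eq_besselSeries hν ht
  refine ⟨fun t ht => ?_, ?_⟩
  · rw [((hα.eventuallyEq_of_mem (Ioi_mem_nhds ht)).deriv).deriv_eq, hα ht, hk']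
    exact besselSeries_ode hν ht
  · exact (tendsto_besselSeries_atTop hν).congr' (hα.symm.eventuallyEq_of_mem (Ioi_mem_atTop 0))
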